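/- Output preservation on neighborhoods of training inputs: Assume the activation σ is continuous. Given data S, a fully-connected NN, a one-layer deeper NN′, a parameter θ of NN, and any lifted parameter θ′ ∈ T_S(θ), for every training input x_i ∈ S_x there exists an open neighborhood N(x_i) ⊆ ℝ^d of x_i such that f_{θ′}(x) = f_θ(x) for all x ∈ N(x_i). -/
import Mathlib


/-!
Common formalization of fully-connected neural networks, one-layer deeper
networks, and the critical lifting operator from
"Embedding Principle in Depth for the Loss Landscape Analysis of Deep Neural Networks".

Vectors are modelled as functions `ℕ → ℝ` (coordinates beyond the layer width
are irrelevant and feature vectors are zero-padded there); parameters assign to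
each layer index `l ≥ 1` a weight "matrix" `ℕ → ℕ → ℝ` and a bias `ℕ → ℝ`.
-/

/-- Parameters of a network: for each layer `l ≥ 1` a weight matrix and a bias. -/
abbrev NNParams : Type := ℕ → (ℕ → ℕ → ℝ) × (ℕ → ℝ)

/-- Feature vectors `f^[l]_θ(x)`: `f^[0]_θ(x) = x` (truncated to the input width),
`f^[l]_θ(x) = σ(W^[l] f^[l-1]_θ(x) + b^[l])` for `1 ≤ l ≤ L-1`, and no activation
at the output layer `L`.  Coordinates outside the layer width are `0`. -/
noncomputable def feat (σ : ℝ → ℝ) (m : ℕ → ℕ) (L : ℕ) (θ : NNParams) (x : ℕ → ℝ) :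
    ℕ → ℕ → ℝ
  | 0 => fun i => if i < m 0 then x i else 0
  | l + 1 => fun i =>
      if i < m (l + 1) then
        (if l + 1 = L then id else σ)
          ((∑ j ∈ Finset.range (m l), (θ (l + 1)).1 i j * feat σ m L θ x l j)
            + (θ (l + 1)).2 i)
      else 0

/-- Output `f_θ(x) = W^[L] f^[L-1]_θ(x) + b^[L]` of the network. -/
noncomputable def nnOut (σ : ℝ → ℝ) (m : ℕ → ℕ) (L : ℕ) (θ : NNParams) (x : ℕ → ℝ) :
    ℕ → ℝ :=
  feat σ m L θ x L

/-- Pre-activation of layer `l ≥ 1`: `W^[l] f^[l-1]_θ(x) + b^[l]`. -/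
noncomputable def preAct (σ : ℝ → ℝ) (m : ℕ → ℕ) (L : ℕ) (θ : NNParams) (x : ℕ → ℝ)
    (l i : ℕ) : ℝ :=
  (∑ j ∈ Finset.range (m (l - 1)), (θ l).1 i j * feat σ m L θ x (l - 1) j) + (θ l).2 i

/-- `(a,b)` is an affine subdomain of `σ` with slope `lam ≠ 0` and intercept `mu`. -/
def AffineSubdomain (σ : ℝ → ℝ) (a b lam mu : ℝ) : Prop :=
  a < b ∧ lam ≠ 0 ∧ ∀ t ∈ Set.Ioo a b, σ t = lam * t + mu

/-- Widths of the one-layer deeper network obtained by inserting a hidden layer of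
width `mh` between layers `q` and `q+1` (the inserted layer gets index `q+1` and
all later layers are shifted up by one). -/
def insertWidth (m : ℕ → ℕ) (q mh : ℕ) : ℕ → ℕ :=
  fun l => if l ≤ q then m l else if l = q + 1 then mh else m (l - 1)

/-- Local-in-layer condition: all layers of the deeper network other than the inserted
layer (deep index `q+1`) and the following layer (deep index `q+2`) are inherited
from the shallow network. -/
def LocalInLayer (m : ℕ → ℕ) (L q : ℕ) (θ θ' : NNParams) : Prop :=
  (∀ l, 1 ≤ l → l ≤ q →
    (∀ i < m l, ∀ j < m (l - 1), (θ' l).1 i j = (θ l).1 i j) ∧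
    (∀ i < m l, (θ' l).2 i = (θ l).2 i)) ∧
  (∀ l, q + 3 ≤ l → l ≤ L + 1 →
    (∀ i < m (l - 1), ∀ j < m (l - 2), (θ' l).1 i j = (θ (l - 1)).1 i j) ∧
    (∀ i < m (l - 1), (θ' l).2 i = (θ (l - 1)).2 i))

/-- Output preserving condition:
`W'^[q+1] diag(λ) W'^[q̂] = W^[q+1]` and
`W'^[q+1] diag(λ) b'^[q̂] + W'^[q+1] μ + b'^[q+1] = b^[q+1]`
(in deep indexing, `W'^[q̂] = (θ' (q+1)).1` and `W'^[q+1] = (θ' (q+2)).1`). -/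
def OutputPres (m : ℕ → ℕ) (q mh : ℕ) (θ θ' : NNParams) (lam mu : ℕ → ℝ) : Prop :=
  (∀ i < m (q + 1), ∀ k < m q,
    (∑ j ∈ Finset.range mh, (θ' (q + 2)).1 i j * (lam j * (θ' (q + 1)).1 j k))
      = (θ (q + 1)).1 i k) ∧
  (∀ i < m (q + 1),
    (∑ j ∈ Finset.range mh, (θ' (q + 2)).1 i j * (lam j * (θ' (q + 1)).2 j + mu j))
      + (θ' (q + 2)).2 i = (θ (q + 1)).2 i)

/-- `θ'` is a one-layer lifting of `θ` with explicit slope/intercept vectors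
`lam, mu` and affine subdomains `(aa j, bb j)`: the local-in-layer, layer
linearization and output preserving conditions. -/
def LiftWitness (σ : ℝ → ℝ) (m : ℕ → ℕ) (L q mh : ℕ) {n : ℕ}
    (S : Fin n → (ℕ → ℝ) × (ℕ → ℝ)) (θ θ' : NNParams) (lam mu aa bb : ℕ → ℝ) : Prop :=
  LocalInLayer m L q θ θ' ∧
  (∀ j < mh, AffineSubdomain σ (aa j) (bb j) (lam j) (mu j) ∧
    ∀ i : Fin n,
      preAct σ (insertWidth m q mh) (L + 1) θ' (S i).1 (q + 1) j ∈ Set.Ioo (aa j) (bb j)) ∧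
  OutputPres m q mh θ θ' lam mu

/-- The one-layer lifting operator `T_S(θ)`: the set of all parameters of the
one-layer deeper network satisfying the local-in-layer, layer linearization and
output preserving conditions. -/
def liftSet (σ : ℝ → ℝ) (m : ℕ → ℕ) (L q mh : ℕ) {n : ℕ}
    (S : Fin n → (ℕ → ℝ) × (ℕ → ℝ)) (θ : NNParams) : Set NNParams :=
  { θ' | ∃ lam mu aa bb : ℕ → ℝ, LiftWitness σ m L q mh S θ θ' lam mu aa bb }

/-- Empirical risk `R_S(θ) = (1/n) ∑ᵢ ℓ(f_θ(xᵢ), yᵢ)`. -/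
noncomputable def empRisk (σ : ℝ → ℝ) (ℓ : (ℕ → ℝ) → (ℕ → ℝ) → ℝ) (m : ℕ → ℕ) (L : ℕ)
    {n : ℕ} (S : Fin n → (ℕ → ℝ) × (ℕ → ℝ)) (θ : NNParams) : ℝ :=
  (1 / (n : ℝ)) * ∑ i : Fin n, ℓ (nnOut σ m L θ (S i).1) (S i).2

/-- Update a single weight entry `W^[l]_{ij}` of the parameters. -/
def updW (θ : NNParams) (l i j : ℕ) (t : ℝ) : NNParams :=
  fun l' => if l' = l then
    ((fun i' j' => if i' = i ∧ j' = j then t else (θ l).1 i' j'), (θ l).2)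
  else θ l'

/-- Update a single bias entry `b^[l]_i` of the parameters. -/
def updB (θ : NNParams) (l i : ℕ) (t : ℝ) : NNParams :=
  fun l' => if l' = l then
    ((θ l).1, fun i' => if i' = i then t else (θ l).2 i')
  else θ l'

/-- `θ` is a critical point of the empirical risk: all partial derivatives with
respect to the weight and bias entries of all layers vanish. -/
def IsCriticalPt (σ : ℝ → ℝ) (ℓ : (ℕ → ℝ) → (ℕ → ℝ) → ℝ) (m : ℕ → ℕ) (L : ℕ)
    {n : ℕ} (S : Fin n → (ℕ → ℝ) × (ℕ → ℝ)) (θ : NNParams) : Prop :=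
  ∀ l, 1 ≤ l → l ≤ L →
    (∀ i < m l, ∀ j < m (l - 1),
      deriv (fun t => empRisk σ ℓ m L S (updW θ l i j t)) ((θ l).1 i j) = 0) ∧
    (∀ i < m l,
      deriv (fun t => empRisk σ ℓ m L S (updB θ l i t)) ((θ l).2 i) = 0)

/-- Feature gradients `g^[l]_θ(x)`: `g^[L] = 1` and `g^[l] = σ'(W^[l] f^[l-1] + b^[l])`
for `l ≤ L-1`; coordinates outside the layer width are `0`. -/
noncomputable def featGrad (σ : ℝ → ℝ) (m : ℕ → ℕ) (L : ℕ) (θ : NNParams) (x : ℕ → ℝ)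
    (l i : ℕ) : ℝ :=
  if i < m l then (if l = L then 1 else deriv σ (preAct σ m L θ x l i)) else 0

/-- Auxiliary downward recursion for error vectors: `errVecAux … k = z^[L-k]`. -/
noncomputable def errVecAux (σ : ℝ → ℝ) (ℓ : (ℕ → ℝ) → (ℕ → ℝ) → ℝ) (m : ℕ → ℕ) (L : ℕ)
    (θ : NNParams) (x y : ℕ → ℝ) : ℕ → ℕ → ℝ
  | 0 => fun i =>
      if i < m L then
        deriv (fun t => ℓ (Function.update (nnOut σ m L θ x) i t) y) (nnOut σ m L θ x i)
      else 0
  | k + 1 => fun i =>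
      if i < m (L - (k + 1)) then
        ∑ p ∈ Finset.range (m (L - k)),
          (θ (L - k)).1 p i * (errVecAux σ ℓ m L θ x y k p * featGrad σ m L θ x (L - k) p)
      else 0

/-- Error vectors `z^[l]_θ(x)`: `z^[L] = ∇_f ℓ(f_θ(x), y)` and
`z^[l] = (W^[l+1])ᵀ (z^[l+1] ∘ g^[l+1])`. -/
noncomputable def errVec (σ : ℝ → ℝ) (ℓ : (ℕ → ℝ) → (ℕ → ℝ) → ℝ) (m : ℕ → ℕ) (L : ℕ)
    (θ : NNParams) (x y : ℕ → ℝ) (l : ℕ) : ℕ → ℝ :=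
  errVecAux σ ℓ m L θ x y (L - l)

/-- A list of insertion positions/widths `(q, mh)` describes a valid chain of
one-layer-deeper insertions starting from widths `m` and depth `L`. -/
def ValidChain (m : ℕ → ℕ) (L : ℕ) : List (ℕ × ℕ) → Prop
  | [] => True
  | (q, mh) :: rest =>
      1 ≤ q ∧ q + 1 ≤ L ∧ min (m q) (m (q + 1)) ≤ mh ∧
        ValidChain (insertWidth m q mh) (L + 1) rest

/-- The widths obtained after performing a chain of insertions. -/
def chainWidths (m : ℕ → ℕ) : List (ℕ × ℕ) → (ℕ → ℕ)
  | [] => m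
  | (q, mh) :: rest => chainWidths (insertWidth m q mh) rest

/-- Multi-layer lifting: the composition of the one-layer liftings along a chain of
insertions. -/
def liftChain (σ : ℝ → ℝ) {n : ℕ} (S : Fin n → (ℕ → ℝ) × (ℕ → ℝ)) :
    (ℕ → ℕ) → ℕ → List (ℕ × ℕ) → NNParams → Set NNParams
  | _, _, [], θ => {θ}
  | m, L, (q, mh) :: rest, θ =>
      {θ'' | ∃ θ', θ' ∈ liftSet σ m L q mh S θ ∧
        θ'' ∈ liftChain σ S (insertWidth m q mh) (L + 1) rest θ'}

/-- `NN'` (widths `m'`, depth `L + J`) is `J`-layer deeper than `NN` (widths `m`,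
depth `L`): it is obtained by `J` successive one-layer insertions, each inserted
layer having width at least the minimum of the widths of its neighboring layers. -/
def JDeeper : ℕ → (ℕ → ℕ) → ℕ → (ℕ → ℕ) → Prop
  | 0, m, L, m' => ∀ l ≤ L, m' l = m l
  | J + 1, m, L, m' =>
      ∃ mmid, JDeeper J m L mmid ∧
        ∃ q mh, 1 ≤ q ∧ q + 1 ≤ L + J ∧ min (mmid q) (mmid (q + 1)) ≤ mh ∧
          ∀ l ≤ L + J + 1, m' l = insertWidth mmid q mh l


section OutputPreservationHelpers

/-- One-step unfolding of `feat`. -/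
private lemma feat_succ (σ : ℝ → ℝ) (m : ℕ → ℕ) (L : ℕ) (θ : NNParams) (x : ℕ → ℝ)
    (l i : ℕ) :
    feat σ m L θ x (l + 1) i
      = if i < m (l + 1) then
          (if l + 1 = L then id else σ)
            ((∑ j ∈ Finset.range (m l), (θ (l + 1)).1 i j * feat σ m L θ x l j)
              + (θ (l + 1)).2 i)
        else 0 := rfl

/-- `feat` depends on the input only through the layer-0 features. -/
private lemma feat_congr_zero (σ : ℝ → ℝ) (m : ℕ → ℕ) (L : ℕ) (θ : NNParams)
    (x y : ℕ → ℝ) (h : ∀ i, feat σ m L θ x 0 i = feat σ m L θ y 0 i) :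
    ∀ l i, feat σ m L θ x l i = feat σ m L θ y l i := by
  intro l
  induction l with
  | zero => exact h
  | succ l ih =>
      intro i
      simp only [feat]
      by_cases hi : i < m (l + 1)
      · rw [if_pos hi, if_pos hi]
        have hs : (∑ j ∈ Finset.range (m l), (θ (l + 1)).1 i j * feat σ m L θ x l j)
            = ∑ j ∈ Finset.range (m l), (θ (l + 1)).1 i j * feat σ m L θ y l j :=
          Finset.sum_congr rfl fun j _ => by rw [ih j]
        rw [hs]
      · rw [if_neg hi, if_neg hi]

/-- Each coordinate of each layer of features is continuous in the input. -/
private lemma feat_continuous (σ : ℝ → ℝ) (hσ : Continuous σ) (m : ℕ → ℕ) (L : ℕ)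
    (θ : NNParams) : ∀ l i, Continuous (fun x : ℕ → ℝ => feat σ m L θ x l i) := by
  intro l
  induction l with
  | zero =>
      intro i
      by_cases hi : i < m 0
      · have : (fun x : ℕ → ℝ => feat σ m L θ x 0 i) = fun x : ℕ → ℝ => x i := by
          funext x; simp [feat, hi]
        rw [this]; exact continuous_apply i
      · have : (fun x : ℕ → ℝ => feat σ m L θ x 0 i) = fun _ => (0 : ℝ) := by
          funext x; simp [feat, hi]
        rw [this]; exact continuous_const
  | succ l ih =>
      intro i
      by_cases hi : i < m (l + 1)
      · have h1 : Continuous (fun x : ℕ → ℝ =>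
            (∑ j ∈ Finset.range (m l), (θ (l + 1)).1 i j * feat σ m L θ x l j)
              + (θ (l + 1)).2 i) := by
          exact (continuous_finset_sum _ fun j _ => continuous_const.mul (ih j)).add
            continuous_const
        have h2 : Continuous (if l + 1 = L then (id : ℝ → ℝ) else σ) := by
          split_ifs
          · exact continuous_id
          · exact hσ
        have : (fun x : ℕ → ℝ => feat σ m L θ x (l + 1) i)
            = fun x => (if l + 1 = L then (id : ℝ → ℝ) else σ)
                ((∑ j ∈ Finset.range (m l), (θ (l + 1)).1 i j * feat σ m L θ x l j)
                  + (θ (l + 1)).2 i) := by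
          funext x; simp only [feat, if_pos hi]
        rw [this]; exact h2.comp h1
      · have : (fun x : ℕ → ℝ => feat σ m L θ x (l + 1) i) = fun _ => (0 : ℝ) := by
          funext x; simp only [feat, if_neg hi]
        rw [this]; exact continuous_const

/-- Up to layer `q`, the deep and shallow networks have identical features. -/
private lemma feat_agree_low (σ : ℝ → ℝ) (m : ℕ → ℕ) (L q mh : ℕ) (hqL : q + 1 ≤ L)
    (θ θ' : NNParams)
    (hloc : ∀ l, 1 ≤ l → l ≤ q →
      (∀ i < m l, ∀ j < m (l - 1), (θ' l).1 i j = (θ l).1 i j) ∧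
      (∀ i < m l, (θ' l).2 i = (θ l).2 i))
    (x : ℕ → ℝ) :
    ∀ l ≤ q, ∀ i, feat σ (insertWidth m q mh) (L + 1) θ' x l i = feat σ m L θ x l i := by
  intro l
  induction l with
  | zero => intro _ i; simp [feat, insertWidth]
  | succ l ih =>
      intro hl i
      have hl' : l ≤ q := Nat.le_of_succ_le hl
      have hw : insertWidth m q mh (l + 1) = m (l + 1) := by
        simp [insertWidth, hl]
      have hwl : insertWidth m q mh l = m l := by
        simp [insertWidth, hl']
      simp only [feat, hw, hwl]
      by_cases hi : i < m (l + 1)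
      · rw [if_pos hi, if_pos hi]
        have hne1 : ¬ (l + 1 = L + 1) := by omega
        have hne2 : ¬ (l + 1 = L) := by omega
        rw [if_neg hne1, if_neg hne2]
        have hW := (hloc (l + 1) (by omega) hl).1 i hi
        have hb := (hloc (l + 1) (by omega) hl).2 i hi
        simp only [Nat.add_sub_cancel] at hW
        have hs : (∑ j ∈ Finset.range (m l),
              (θ' (l + 1)).1 i j * feat σ (insertWidth m q mh) (L + 1) θ' x l j)
            = ∑ j ∈ Finset.range (m l), (θ (l + 1)).1 i j * feat σ m L θ x l j := by
          refine Finset.sum_congr rfl fun j hj => ?_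
          rw [Finset.mem_range] at hj
          rw [ih hl' j, hW j hj]
        rw [hs, hb]
      · rw [if_neg hi, if_neg hi]

/-- Pointwise output preservation given that the pre-activations of the inserted
layer lie in the affine subdomains. -/
private lemma nnOut_agree (σ : ℝ → ℝ) (m : ℕ → ℕ) (L q mh : ℕ)
    (hq : 1 ≤ q) (hqL : q + 1 ≤ L)
    (θ θ' : NNParams) (lam mu aa bb : ℕ → ℝ)
    (hloc : LocalInLayer m L q θ θ')
    (haff : ∀ j < mh, AffineSubdomain σ (aa j) (bb j) (lam j) (mu j))
    (hout : OutputPres m q mh θ θ' lam mu)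
    (x : ℕ → ℝ)
    (hIoo : ∀ j < mh,
      preAct σ (insertWidth m q mh) (L + 1) θ' x (q + 1) j ∈ Set.Ioo (aa j) (bb j)) :
    nnOut σ (insertWidth m q mh) (L + 1) θ' x = nnOut σ m L θ x := by
  set m' := insertWidth m q mh with hm'
  have hlow : ∀ l ≤ q, ∀ i, feat σ m' (L + 1) θ' x l i = feat σ m L θ x l i :=
    feat_agree_low σ m L q mh hqL θ θ' hloc.1 x
  have hwq1 : m' (q + 1) = mh := by simp [hm', insertWidth]
  have hwq : m' q = m q := by simp [hm', insertWidth]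
  -- Step B: inserted layer features are affine in the pre-activation
  have hB : ∀ j < mh, feat σ m' (L + 1) θ' x (q + 1) j
      = lam j * preAct σ m' (L + 1) θ' x (q + 1) j + mu j := by
    intro j hj
    have hne : ¬ (q + 1 = L + 1) := by omega
    have hj' : j < m' (q + 1) := by rw [hwq1]; exact hj
    rw [feat_succ σ m' (L + 1) θ' x q j, if_pos hj', if_neg hne]
    have hpre : preAct σ m' (L + 1) θ' x (q + 1) j
        = (∑ k ∈ Finset.range (m' q), (θ' (q + 1)).1 j k * feat σ m' (L + 1) θ' x q k)
          + (θ' (q + 1)).2 j := by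
      simp only [preAct, Nat.add_sub_cancel]
    rw [← hpre]
    exact (haff j hj).2.2 _ (hIoo j hj)
  -- Step C: layer q+2 of the deep net equals layer q+1 of the shallow net
  have stepC : ∀ i, feat σ m' (L + 1) θ' x (q + 2) i = feat σ m L θ x (q + 1) i := by
    intro i
    have hwq2 : m' (q + 2) = m (q + 1) := by simp [hm', insertWidth]
    by_cases hi : i < m (q + 1)
    · have hi' : i < m' (q + 2) := by rw [hwq2]; exact hi
      have key : (∑ j ∈ Finset.range (m' (q + 1)),
            (θ' (q + 2)).1 i j * feat σ m' (L + 1) θ' x (q + 1) j) + (θ' (q + 2)).2 i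
          = (∑ k ∈ Finset.range (m q), (θ (q + 1)).1 i k * feat σ m L θ x q k)
            + (θ (q + 1)).2 i := by
        rw [hwq1]
        have h1 : ∀ j ∈ Finset.range mh,
            (θ' (q + 2)).1 i j * feat σ m' (L + 1) θ' x (q + 1) j
            = (∑ k ∈ Finset.range (m q),
                ((θ' (q + 2)).1 i j * (lam j * (θ' (q + 1)).1 j k))
                  * feat σ m' (L + 1) θ' x q k)
              + (θ' (q + 2)).1 i j * (lam j * (θ' (q + 1)).2 j + mu j) := by
          intro j hj
          rw [Finset.mem_range] at hj
          rw [hB j hj]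
          have hpre : preAct σ m' (L + 1) θ' x (q + 1) j
              = (∑ k ∈ Finset.range (m q),
                  (θ' (q + 1)).1 j k * feat σ m' (L + 1) θ' x q k)
                + (θ' (q + 1)).2 j := by
            simp only [preAct, Nat.add_sub_cancel, hwq]
          rw [hpre]
          have e1 : (θ' (q + 2)).1 i j
                * (lam j * ((∑ k ∈ Finset.range (m q),
                    (θ' (q + 1)).1 j k * feat σ m' (L + 1) θ' x q k)
                  + (θ' (q + 1)).2 j) + mu j)
              = (θ' (q + 2)).1 i j * lam j
                  * (∑ k ∈ Finset.range (m q),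
                      (θ' (q + 1)).1 j k * feat σ m' (L + 1) θ' x q k)
                + (θ' (q + 2)).1 i j * (lam j * (θ' (q + 1)).2 j + mu j) := by ring
          rw [e1, Finset.mul_sum]
          congr 1
          exact Finset.sum_congr rfl fun k _ => by ring
        rw [Finset.sum_congr rfl h1, Finset.sum_add_distrib]
        rw [add_assoc, (hout.2 i hi)]
        congr 1
        rw [Finset.sum_comm]
        refine Finset.sum_congr rfl fun k hk => ?_
        rw [Finset.mem_range] at hk
        rw [← Finset.sum_mul, hout.1 i hi k hk, hlow q le_rfl k]
      have hact : (q + 1 + 1 = L + 1) ↔ (q + 1 = L) := by omega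
      rw [show q + 2 = q + 1 + 1 from rfl] at hi' ⊢
      rw [feat_succ σ m' (L + 1) θ' x (q + 1) i, feat_succ σ m L θ x q i,
        if_pos hi', if_pos hi, key]
      by_cases hL : q + 1 = L
      · rw [if_pos (hact.mpr hL), if_pos hL]
      · rw [if_neg (fun h => hL (hact.mp h)), if_neg hL]
    · have hi' : ¬ i < m' (q + 2) := by rw [hwq2]; exact hi
      rw [show q + 2 = q + 1 + 1 from rfl] at hi' ⊢
      rw [feat_succ σ m' (L + 1) θ' x (q + 1) i, feat_succ σ m L θ x q i,
        if_neg hi', if_neg hi]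
  -- Step D: propagate equality upwards
  have stepD : ∀ l, q + 1 ≤ l → l ≤ L → ∀ i,
      feat σ m' (L + 1) θ' x (l + 1) i = feat σ m L θ x l i := by
    intro l
    induction l with
    | zero => omega
    | succ l ih =>
        intro h1 h2 i
        by_cases hc : l + 1 = q + 1
        · have : l = q := by omega
          subst this
          exact stepC i
        · have hl1 : q + 1 ≤ l := by omega
          have hl2 : l ≤ L := by omega
          have hwl2 : m' (l + 2) = m (l + 1) := by
            simp only [hm', insertWidth]
            rw [if_neg (by omega), if_neg (by omega)]
            congr 1
          have hwl1 : m' (l + 1) = m l := by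
            simp only [hm', insertWidth]
            rw [if_neg (by omega), if_neg (by omega)]
            congr 1
          by_cases hi : i < m (l + 1)
          · have hi' : i < m' (l + 2) := by rw [hwl2]; exact hi
            have hact : (l + 1 + 1 = L + 1) ↔ (l + 1 = L) := by omega
            have hW := (hloc.2 (l + 2) (by omega) (by omega)).1 i
            have hb := (hloc.2 (l + 2) (by omega) (by omega)).2 i
            simp only [show l + 2 - 1 = l + 1 from rfl,
              show l + 2 - 2 = l from rfl] at hW hb
            have hs : (∑ j ∈ Finset.range (m' (l + 1)),
                  (θ' (l + 2)).1 i j * feat σ m' (L + 1) θ' x (l + 1) j)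
                = ∑ j ∈ Finset.range (m l), (θ (l + 1)).1 i j * feat σ m L θ x l j := by
              rw [hwl1]
              refine Finset.sum_congr rfl fun j hj => ?_
              rw [Finset.mem_range] at hj
              rw [ih hl1 hl2 j, hW hi j hj]
            rw [show l + 2 = l + 1 + 1 from rfl] at hi' ⊢
            rw [feat_succ σ m' (L + 1) θ' x (l + 1) i, feat_succ σ m L θ x l i,
              if_pos hi', if_pos hi, hs, hb hi]
            by_cases hL : l + 1 = L
            · rw [if_pos (hact.mpr hL), if_pos hL]
            · rw [if_neg (fun h => hL (hact.mp h)), if_neg hL]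
          · have hi' : ¬ i < m' (l + 2) := by rw [hwl2]; exact hi
            rw [show l + 2 = l + 1 + 1 from rfl] at hi' ⊢
            rw [feat_succ σ m' (L + 1) θ' x (l + 1) i, feat_succ σ m L θ x l i,
              if_neg hi', if_neg hi]
  funext i
  exact stepD L hqL le_rfl i

end OutputPreservationHelpers

/-- **Output preservation on neighborhoods of training inputs.**  Assume `σ` is
continuous.  For every `θ' ∈ T_S(θ)` and every training input `xᵢ` there is an
open neighborhood of `xᵢ` (in the `d = m 0` relevant input coordinates) on which
the deep and shallow networks have the same output function. -/
theorem output_preservation_on_neighborhoods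
    (σ : ℝ → ℝ) (m : ℕ → ℕ) (L q mh : ℕ)
    (hq : 1 ≤ q) (hqL : q + 1 ≤ L)
    (hmh : min (m q) (m (q + 1)) ≤ mh)
    (hσ : Continuous σ)
    {n : ℕ} (S : Fin n → (ℕ → ℝ) × (ℕ → ℝ)) (θ θ' : NNParams)
    (hθ' : θ' ∈ liftSet σ m L q mh S θ) :
    ∀ i : Fin n, ∃ δ > (0 : ℝ), ∀ x : ℕ → ℝ,
      (∀ k < m 0, |x k - (S i).1 k| < δ) →
      nnOut σ (insertWidth m q mh) (L + 1) θ' x = nnOut σ m L θ x := by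
  obtain ⟨lam, mu, aa, bb, hloc, hlin, hout⟩ := hθ'
  intro i
  set m' := insertWidth m q mh with hm'
  set d := m 0 with hd
  -- extension of a finite vector by zeros
  set e : (Fin d → ℝ) → (ℕ → ℝ) := fun v k => if h : k < d then v ⟨k, h⟩ else 0 with he
  set r : (ℕ → ℝ) → (Fin d → ℝ) := fun x k => x k with hr
  have hm'0 : m' 0 = d := by simp [hm', insertWidth, hd]
  -- feat of deep net only depends on the first d coordinates
  have hfix : ∀ x : ℕ → ℝ, ∀ l k,
      feat σ m' (L + 1) θ' (e (r x)) l k = feat σ m' (L + 1) θ' x l k := by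
    intro x
    refine feat_congr_zero σ m' (L + 1) θ' (e (r x)) x fun k => ?_
    by_cases hk : k < m' 0
    · have hk' : k < d := by rwa [hm'0] at hk
      simp only [feat, if_pos hk, he, hr, dif_pos hk']
    · simp only [feat, if_neg hk]
  have hpre_fix : ∀ x : ℕ → ℝ, ∀ j,
      preAct σ m' (L + 1) θ' (e (r x)) (q + 1) j
        = preAct σ m' (L + 1) θ' x (q + 1) j := by
    intro x j
    simp only [preAct]
    congr 1
    exact Finset.sum_congr rfl fun k _ => by rw [hfix x]
  -- continuity of the inserted layer pre-activations on Fin d → ℝ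
  have he_cont : Continuous e := by
    refine continuous_pi fun k => ?_
    by_cases hk : k < d
    · have : (fun v : Fin d → ℝ => e v k) = fun v => v ⟨k, hk⟩ := by
        funext v; simp [he, hk]
      rw [this]; exact continuous_apply _
    · have : (fun v : Fin d → ℝ => e v k) = fun _ => (0 : ℝ) := by
        funext v; simp [he, hk]
      rw [this]; exact continuous_const
  have hG : ∀ j, Continuous (fun v : Fin d → ℝ =>
      preAct σ m' (L + 1) θ' (e v) (q + 1) j) := by
    intro j
    have h1 : Continuous (fun x : ℕ → ℝ => preAct σ m' (L + 1) θ' x (q + 1) j) := by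
      simp only [preAct]
      exact (continuous_finset_sum _ fun k _ =>
        continuous_const.mul (feat_continuous σ hσ m' (L + 1) θ' _ k)).add continuous_const
    exact h1.comp he_cont
  -- the open set where all pre-activations are in their affine subdomains
  set U : Set (Fin d → ℝ) := ⋂ j ∈ Finset.range mh,
    (fun v : Fin d → ℝ => preAct σ m' (L + 1) θ' (e v) (q + 1) j) ⁻¹'
      Set.Ioo (aa j) (bb j) with hU
  have hUopen : IsOpen U := isOpen_biInter_finset fun j _ => (isOpen_Ioo).preimage (hG j)
  have hv0 : r (S i).1 ∈ U := by
    rw [hU]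
    simp only [Set.mem_iInter, Set.mem_preimage, Finset.mem_range]
    intro j hj
    rw [hpre_fix (S i).1 j]
    exact (hlin j hj).2 i
  obtain ⟨δ, hδ, hball⟩ := Metric.isOpen_iff.mp hUopen _ hv0
  refine ⟨δ, hδ, fun x hx => ?_⟩
  have hxU : r x ∈ U := by
    apply hball
    rw [Metric.mem_ball]
    rw [dist_pi_lt_iff hδ]
    intro b
    rw [Real.dist_eq]
    exact hx b b.2
  have hIoo : ∀ j < mh,
      preAct σ m' (L + 1) θ' x (q + 1) j ∈ Set.Ioo (aa j) (bb j) := by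
    intro j hj
    rw [hU] at hxU
    simp only [Set.mem_iInter, Set.mem_preimage, Finset.mem_range] at hxU
    rw [← hpre_fix x j]
    exact hxU j hj
  exact nnOut_agree σ m L q mh hq hqL θ θ' lam mu aa bb hloc
    (fun j hj => (hlin j hj).1) hout x hIoo
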